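/- Let |φ⁺⟩ = (|00⟩+|11⟩)/√2, |+⟩ = (|0⟩+|1⟩)/√2, and consider the three-qubit density matrix ρ = ½(|φ⁺⟩⟨φ⁺|_{AB} ⊗ |+⟩⟨+|_C + |φ⁺⟩⟨φ⁺|_{AC} ⊗ |+⟩⟨+|_B) on ℂ²⊗ℂ²⊗ℂ² (subscripts indicating which pair of qubits carries |φ⁺⟩). Let X = σ_x and Z = σ_z be the Pauli matrices. Then Tr[ρ (X⊗X⊗X)] = 1, Tr[ρ (Z⊗Z⊗1)] = 1/2 and Tr[ρ (Z⊗1⊗Z)] = 1/2, and consequently the tripartite BB84 key-rate expression evaluates to 1 − h((1−⟨X_AX_BX_C⟩)/2) − max( h((1−⟨Z_AZ_B⟩)/2), h((1−⟨Z_AZ_C⟩)/2) ) = 1 − h(1/4), where h is the binary entropy with logarithm base 2. -/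
import Mathlib


open scoped BigOperators

noncomputable section

/-- Binary entropy with logarithm base 2 (`h 0 = h 1 = 0` automatically since
`Real.logb 2 0 = 0`). -/
def binEnt (p : ℝ) : ℝ :=
  -(p * Real.logb 2 p) - (1 - p) * Real.logb 2 (1 - p)

/-- The Bell state `|φ⁺⟩ = (|00⟩ + |11⟩)/√2` as a vector in `ℂ² ⊗ ℂ²`. -/
def phiPlus : Fin 2 × Fin 2 → ℂ :=
  fun p => if p.1 = p.2 then (Real.sqrt 2 : ℂ)⁻¹ else 0

/-- The state `|+⟩ = (|0⟩ + |1⟩)/√2`. -/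
def plusVec : Fin 2 → ℂ := fun _ => (Real.sqrt 2 : ℂ)⁻¹

/-- The biseparable three-qubit state
`ρ = ½(|φ⁺⟩⟨φ⁺|_{AB} ⊗ |+⟩⟨+|_C + |φ⁺⟩⟨φ⁺|_{AC} ⊗ |+⟩⟨+|_B)` on `ℂ²⊗ℂ²⊗ℂ²`. -/
def ρbisep : Matrix (Fin 2 × Fin 2 × Fin 2) (Fin 2 × Fin 2 × Fin 2) ℂ :=
  Matrix.of fun p q =>
    (1 / 2 : ℂ) *
      (phiPlus (p.1, p.2.1) * star (phiPlus (q.1, q.2.1))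
          * plusVec p.2.2 * star (plusVec q.2.2)
        + phiPlus (p.1, p.2.2) * star (phiPlus (q.1, q.2.2))
          * plusVec p.2.1 * star (plusVec q.2.1))

/-- Pauli `σ_x`. -/
def pauliX : Matrix (Fin 2) (Fin 2) ℂ := !![0, 1; 1, 0]

/-- Pauli `σ_z`. -/
def pauliZ : Matrix (Fin 2) (Fin 2) ℂ := !![1, 0; 0, -1]

/-- `X ⊗ X ⊗ X` on three qubits. -/
def XXX : Matrix (Fin 2 × Fin 2 × Fin 2) (Fin 2 × Fin 2 × Fin 2) ℂ :=
  Matrix.of fun p q => pauliX p.1 q.1 * pauliX p.2.1 q.2.1 * pauliX p.2.2 q.2.2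

/-- `Z ⊗ Z ⊗ 1` on three qubits. -/
def ZZI : Matrix (Fin 2 × Fin 2 × Fin 2) (Fin 2 × Fin 2 × Fin 2) ℂ :=
  Matrix.of fun p q =>
    pauliZ p.1 q.1 * pauliZ p.2.1 q.2.1 * (if p.2.2 = q.2.2 then 1 else 0)

/-- `Z ⊗ 1 ⊗ Z` on three qubits. -/
def ZIZ : Matrix (Fin 2 × Fin 2 × Fin 2) (Fin 2 × Fin 2 × Fin 2) ℂ :=
  Matrix.of fun p q =>
    pauliZ p.1 q.1 * (if p.2.1 = q.2.1 then 1 else 0) * pauliZ p.2.2 q.2.2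

lemma s2 : ((Real.sqrt 2 : ℂ))⁻¹ * ((Real.sqrt 2 : ℂ))⁻¹ = 1/2 := by
  rw [← mul_inv]
  norm_cast
  rw [Real.mul_self_sqrt (by norm_num : (0:ℝ) ≤ 2)]
  norm_num

lemma trX : (ρbisep * XXX).trace = 1 := by
  simp only [Matrix.trace, Matrix.diag, Matrix.mul_apply, ρbisep, XXX, phiPlus, plusVec, pauliX,
    Matrix.of_apply, Fintype.sum_prod_type, Fin.sum_univ_two, Complex.star_def]
  norm_num [apply_ite (starRingEnd ℂ), Complex.conj_ofReal, s2]
  linear_combination (2:ℂ) * s2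

lemma trZZ : (ρbisep * ZZI).trace = 1/2 := by
  simp only [Matrix.trace, Matrix.diag, Matrix.mul_apply, ρbisep, ZZI, phiPlus, plusVec, pauliZ,
    Matrix.of_apply, Fintype.sum_prod_type, Fin.sum_univ_two, Complex.star_def]
  norm_num [apply_ite (starRingEnd ℂ), Complex.conj_ofReal, s2]
  linear_combination (1:ℂ) * s2

lemma trZZ' : (ρbisep * ZIZ).trace = 1/2 := by
  simp only [Matrix.trace, Matrix.diag, Matrix.mul_apply, ρbisep, ZIZ, phiPlus, plusVec, pauliZ,
    Matrix.of_apply, Fintype.sum_prod_type, Fin.sum_univ_two, Complex.star_def]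
  norm_num [apply_ite (starRingEnd ℂ), Complex.conj_ofReal, s2]
  linear_combination (1:ℂ) * s2

/-- **The explicit biseparable state achieves the tripartite BB84 key rate `1 − h(1/4)`.**
`Tr[ρ XXX] = 1`, `Tr[ρ ZZ1] = 1/2`, `Tr[ρ Z1Z] = 1/2`, and the BB84 key-rate expression
evaluates to `1 − h(1/4)`. -/
theorem stmt15 :
    (ρbisep * XXX).trace = 1 ∧
    (ρbisep * ZZI).trace = 1 / 2 ∧
    (ρbisep * ZIZ).trace = 1 / 2 ∧
    1 - binEnt ((1 - ((ρbisep * XXX).trace).re) / 2)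
      - max (binEnt ((1 - ((ρbisep * ZZI).trace).re) / 2))
            (binEnt ((1 - ((ρbisep * ZIZ).trace).re) / 2))
      = 1 - binEnt (1 / 4) := by
  refine ⟨trX, trZZ, trZZ', ?_⟩
  rw [trX, trZZ, trZZ']
  norm_num
  simp [binEnt]

end
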